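/- arXiv:1605.06360 — 4 statements merged into one kernel-verified Lean document; each statement's English description precedes it below -/
import Mathlib

section
/- If G is a finite simple graph with m edges, then λ₁(G) ≤ (−1 + √(8m+1))/2. -/
open SimpleGraph Finset Matrix

/-- The largest eigenvalue of the adjacency matrix of a finite graph. -/
noncomputable def lam1 {V : Type*} [Fintype V] [DecidableEq V] (G : SimpleGraph V)
    [DecidableRel G.Adj] : ℝ :=
  sSup {μ : ℝ | Module.End.HasEigenvalue (Matrix.toLin' (G.adjMatrix ℝ)) μ}

/-- The hypercube graph `Q_d`, with vertices the subsets of `[d]`. -/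
def cube (d : ℕ) : SimpleGraph (Finset (Fin d)) where
  Adj S T := (symmDiff S T).card = 1
  symm := ⟨fun S T h => by simpa [symmDiff_comm] using h⟩
  loopless := ⟨fun S h => by simp [symmDiff_self] at h⟩

instance cubeAdjDec (d : ℕ) : DecidableRel (cube d).Adj :=
  fun S T => inferInstanceAs (Decidable ((symmDiff S T).card = 1))

instance cubeInduceAdjDec (d : ℕ) (s : Set (Finset (Fin d))) :
    DecidableRel ((cube d).induce s).Adj :=
  fun a b => cubeAdjDec d a b

/-! Let `x` be an eigenvector of the adjacency matrix `A` for `μ` and `v` a vertex where `|x|` is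
largest. Reading `A x = μ x` and `A² x = μ² x` at `v` gives `|μ| ≤ d(v)` and
`μ² ≤ ∑_{u ∼ v} d(u)`; as `v` is not its own neighbour, `μ² + |μ| ≤ ∑_u d(u) = 2m`, and
`(-1 + √(8m + 1)) / 2` is the positive root of `t² + t = 2m`. -/

theorem Real.le_neg_one_add_sqrt_div_two {a m : ℝ} (h : a ^ 2 + a ≤ 2 * m) :
    a ≤ (-1 + √(8 * m + 1)) / 2 := by
  have : |2 * a + 1| ≤ √(8 * m + 1) := Real.abs_le_sqrt (by linarith)
  linarith [le_abs_self (2 * a + 1)]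

namespace SimpleGraph

variable {V : Type*} [Fintype V] (G : SimpleGraph V) [DecidableRel G.Adj]

theorem abs_sum_neighborFinset_le {x : V → ℝ} {c : ℝ} (hx : ∀ w, |x w| ≤ c) (u : V) :
    |∑ w ∈ G.neighborFinset u, x w| ≤ G.degree u * c :=
  calc |∑ w ∈ G.neighborFinset u, x w| ≤ ∑ w ∈ G.neighborFinset u, |x w| :=
        abs_sum_le_sum_abs _ _
    _ ≤ G.degree u * c := by
        rw [← card_neighborFinset_eq_degree, ← nsmul_eq_mul]
        exact Finset.sum_le_card_nsmul _ _ c fun w _ => hx w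

variable [DecidableEq V]

theorem sum_degree_neighborFinset_add_degree_le (v : V) :
    ∑ u ∈ G.neighborFinset v, G.degree u + G.degree v ≤ 2 * #G.edgeFinset := by
  calc ∑ u ∈ G.neighborFinset v, G.degree u + G.degree v
      = ∑ u ∈ insert v (G.neighborFinset v), G.degree u := by
        rw [Finset.sum_insert (G.notMem_neighborFinset_self v), add_comm]
    _ ≤ ∑ u, G.degree u := Finset.sum_le_sum_of_subset (Finset.subset_univ _)
    _ = 2 * #G.edgeFinset := G.sum_degrees_eq_twice_card_edges

theorem sum_neighborFinset_eq_of_hasEigenvector {μ : ℝ} {x : V → ℝ}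
    (hx : Module.End.HasEigenvector (toLin' (G.adjMatrix ℝ)) μ x) (u : V) :
    ∑ w ∈ G.neighborFinset u, x w = μ * x u := by
  rw [← adjMatrix_mulVec_apply, ← toLin'_apply, hx.apply_eq_smul, Pi.smul_apply, smul_eq_mul]

theorem sq_add_abs_le_of_hasEigenvalue {μ : ℝ}
    (hμ : Module.End.HasEigenvalue (toLin' (G.adjMatrix ℝ)) μ) :
    μ ^ 2 + |μ| ≤ 2 * #G.edgeFinset := by
  obtain ⟨x, hx⟩ := hμ.exists_hasEigenvector
  have hA := G.sum_neighborFinset_eq_of_hasEigenvector hx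
  obtain ⟨v₀, hv₀⟩ := Function.ne_iff.mp hx.2
  have : Nonempty V := ⟨v₀⟩
  obtain ⟨v, -, hv⟩ := Finset.exists_max_image Finset.univ (fun u => |x u|) Finset.univ_nonempty
  replace hv : ∀ u, |x u| ≤ |x v| := fun u => hv u (Finset.mem_univ u)
  have hxv : 0 < |x v| := (abs_pos.mpr hv₀).trans_le (hv v₀)
  have h₁ : |μ| * |x v| ≤ G.degree v * |x v| := by
    rw [← abs_mul, ← hA v]
    exact G.abs_sum_neighborFinset_le hv v
  have h₂ : μ ^ 2 * |x v| ≤ (∑ u ∈ G.neighborFinset v, (G.degree u : ℝ)) * |x v| := by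
    have hA2 : μ ^ 2 * x v = ∑ u ∈ G.neighborFinset v, ∑ w ∈ G.neighborFinset u, x w := by
      simp only [hA, ← Finset.mul_sum, pow_two, mul_assoc]
    rw [← abs_of_nonneg (sq_nonneg μ), ← abs_mul, hA2, Finset.sum_mul]
    exact (abs_sum_le_sum_abs _ _).trans
      (Finset.sum_le_sum fun u _ => G.abs_sum_neighborFinset_le hv u)
  have hdeg : ∑ u ∈ G.neighborFinset v, (G.degree u : ℝ) + G.degree v ≤ 2 * #G.edgeFinset := by
    exact_mod_cast G.sum_degree_neighborFinset_add_degree_le v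
  refine le_of_mul_le_mul_right ?_ hxv
  calc (μ ^ 2 + |μ|) * |x v|
      ≤ (∑ u ∈ G.neighborFinset v, (G.degree u : ℝ) + G.degree v) * |x v| := by linarith
    _ ≤ 2 * #G.edgeFinset * |x v| := by gcongr

end SimpleGraph

theorem stanley_bound {V : Type*} [Fintype V] [DecidableEq V]
    (G : SimpleGraph V) [DecidableRel G.Adj] :
    lam1 G ≤ (-1 + Real.sqrt (8 * (G.edgeFinset.card : ℝ) + 1)) / 2 := by
  refine Real.sSup_le (fun μ hμ => Real.le_neg_one_add_sqrt_div_two ?_) ?_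
  · linarith [G.sq_add_abs_le_of_hasEigenvalue hμ, le_abs_self μ]
  · exact Real.le_neg_one_add_sqrt_div_two (by simp)
end

section
/- Let s(G) denote the maximum over vertices u of the sum of the degrees of vertices adjacent to u. Then λ₁(G) ≤ √(s(G)). -/
open SimpleGraph Finset Matrix

/-! If `A x = μ x` then `μ²` is an eigenvalue of `A²`. The row sums of `A²` are the neighbour degree
sums `∑_{w ∼ u} deg w`, and `A²` is entrywise nonnegative, so Gershgorin's circle theorem bounds
`μ²` by its largest row sum. -/

theorem Matrix.exists_norm_le_sum_norm_of_hasEigenvalue {K n : Type*} [NormedField K]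
    [Fintype n] [DecidableEq n] {A : Matrix n n K} {μ : K}
    (hμ : Module.End.HasEigenvalue (Matrix.toLin' A) μ) : ∃ k, ‖μ‖ ≤ ∑ j, ‖A k j‖ := by
  obtain ⟨k, hk⟩ := eigenvalue_mem_ball hμ
  refine ⟨k, ?_⟩
  rw [mem_closedBall_iff_norm'] at hk
  calc ‖μ‖ ≤ ‖A k k‖ + ‖μ - A k k‖ := norm_le_norm_add_norm_sub' μ (A k k)
    _ ≤ ‖A k k‖ + ∑ j ∈ univ.erase k, ‖A k j‖ := by rw [norm_sub_rev]; gcongr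
    _ = ∑ j, ‖A k j‖ := Finset.add_sum_erase _ (fun j => ‖A k j‖) (mem_univ k)

theorem SimpleGraph.sum_adjMatrix_sq_apply {V R : Type*} [Fintype V] [DecidableEq V]
    [Semiring R] (G : SimpleGraph V) [DecidableRel G.Adj] (u : V) :
    ∑ v, (G.adjMatrix R ^ 2) u v = ∑ w ∈ G.neighborFinset u, (G.degree w : R) := by
  calc ∑ v, (G.adjMatrix R ^ 2) u v = (G.adjMatrix R ^ 2 *ᵥ Function.const V 1) u := by
        simp [Matrix.mulVec, dotProduct]
    _ = ∑ w ∈ G.neighborFinset u, (G.degree w : R) := by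
        rw [sq, ← Matrix.mulVec_mulVec, adjMatrix_mulVec_apply]
        exact sum_congr rfl fun w _ => by rw [adjMatrix_mulVec_const_apply, mul_one]

theorem SimpleGraph.exists_sq_le_of_hasEigenvalue_adjMatrix {V : Type*} [Fintype V]
    [DecidableEq V] (G : SimpleGraph V) [DecidableRel G.Adj] {μ : ℝ}
    (hμ : Module.End.HasEigenvalue (Matrix.toLin' (G.adjMatrix ℝ)) μ) :
    ∃ u, μ ^ 2 ≤ ∑ v ∈ G.neighborFinset u, G.degree v := by
  have hμ2 : Module.End.HasEigenvalue (Matrix.toLin' (G.adjMatrix ℝ ^ 2)) (μ ^ 2) := by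
    simpa only [Matrix.toLin'_pow] using hμ.pow 2
  obtain ⟨u, hu⟩ := Matrix.exists_norm_le_sum_norm_of_hasEigenvalue hμ2
  have hnonneg : ∀ v, 0 ≤ (G.adjMatrix ℝ ^ 2) u v := fun v => by
    rw [adjMatrix_pow_apply_eq_card_walk]
    positivity
  refine ⟨u, ?_⟩
  calc μ ^ 2 = ‖μ ^ 2‖ := (Real.norm_of_nonneg (sq_nonneg μ)).symm
    _ ≤ ∑ v, ‖(G.adjMatrix ℝ ^ 2) u v‖ := hu
    _ = ∑ v, (G.adjMatrix ℝ ^ 2) u v := sum_congr rfl fun v _ => Real.norm_of_nonneg (hnonneg v)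
    _ = _ := by rw [G.sum_adjMatrix_sq_apply, Nat.cast_sum]

theorem favaron_maheo_sacle {V : Type*} [Fintype V] [DecidableEq V]
    (G : SimpleGraph V) [DecidableRel G.Adj] :
    lam1 G ≤ Real.sqrt ((Finset.univ.sup
      (fun u => ∑ v ∈ G.neighborFinset u, G.degree v) : ℕ) : ℝ) := by
  refine Real.sSup_le (fun μ hμ => ?_) (Real.sqrt_nonneg _)
  obtain ⟨u, hu⟩ := G.exists_sq_le_of_hasEigenvalue_adjMatrix hμ
  calc μ ≤ |μ| := le_abs_self μ
    _ = Real.sqrt (μ ^ 2) := (Real.sqrt_sq_eq_abs μ).symm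
    _ ≤ _ := by
      gcongr
      exact hu.trans <| by
        exact_mod_cast le_sup (f := fun u => ∑ v ∈ G.neighborFinset u, G.degree v) (mem_univ u)
end

section
/- Let i ≠ j ∈ [d] and v ∈ ℝ^{V(Q_d)}. Define C_{i,j}(v) which, for each set S with i ∈ S and j ∉ S, replaces (v_S, v_{S△{i,j}}) by (min, max) respectively so that the larger value sits on the set containing j. Then ⟨A(Q_d) v, v⟩ ≤ ⟨A(Q_d) C_{i,j}(v), C_{i,j}(v)⟩. -/
open SimpleGraph Finset Matrix

/-- The compression `C_{i,j}`: for pairs `(S, S △ {i,j})` with `i ∈ S`, `j ∉ S`,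
the values are rearranged so that the larger value sits on the set containing `j` but not `i`. -/
noncomputable def compIJ (d : ℕ) (i j : Fin d) (v : Finset (Fin d) → ℝ) :
    Finset (Fin d) → ℝ := fun S =>
  if i ∈ S ∧ j ∉ S then min (v S) (v (insert j (S.erase i)))
  else if j ∈ S ∧ i ∉ S then max (v S) (v (insert i (S.erase j)))
  else v S

/-! Swapping `i` and `j` in every subset is an automorphism `σ` of `Q_d`, so
`2 ⟨A v, v⟩ = ∑_{S ~ T} (v_S v_T + v_{σS} v_{σT})`, summed over ordered adjacent pairs.
The compression only reorders each pair `(v_S, v_{σS})`. If `S` is fixed by `σ`, the summand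
depends on the pair at `T` only through its sum, which compression preserves; if neither endpoint
is fixed, adjacency forces both pairs to be oriented the same way, and the summand can only grow
by the two-term rearrangement inequality. -/

namespace SimpleGraph

variable {V α : Type*} [Fintype V] {G : SimpleGraph V} [DecidableRel G.Adj]

theorem dotProduct_adjMatrix_mulVec_eq_sum [CommSemiring α] (u : V → α) :
    u ⬝ᵥ (G.adjMatrix α *ᵥ u) = ∑ S, ∑ T, G.adjMatrix α S T * (u S * u T) := by
  simp only [dotProduct, mulVec, Finset.mul_sum]
  exact Finset.sum_congr rfl fun S _ => Finset.sum_congr rfl fun T _ => by ring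

theorem Iso.dotProduct_adjMatrix_mulVec_comp [NonAssocSemiring α] (φ : G ≃g G) (u : V → α) :
    (u ∘ φ) ⬝ᵥ (G.adjMatrix α *ᵥ (u ∘ φ)) = u ⬝ᵥ (G.adjMatrix α *ᵥ u) := by
  calc (u ∘ φ) ⬝ᵥ (G.adjMatrix α *ᵥ (u ∘ φ))
      = (u ∘ φ.toEquiv) ⬝ᵥ
          ((G.adjMatrix α).submatrix φ.toEquiv φ.toEquiv *ᵥ (u ∘ φ.toEquiv)) := by
        rw [show (G.adjMatrix α).submatrix φ.toEquiv φ.toEquiv = G.adjMatrix α from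
          φ.toEmbedding.submatrix_adjMatrix α]
        rfl
    _ = (u ∘ φ.toEquiv) ⬝ᵥ ((G.adjMatrix α *ᵥ u) ∘ φ.toEquiv) := by
        rw [submatrix_mulVec_equiv, Function.comp_assoc, Equiv.self_comp_symm, Function.comp_id]
    _ = u ⬝ᵥ (G.adjMatrix α *ᵥ u) := comp_equiv_dotProduct_comp_equiv _ _ _

theorem dotProduct_adjMatrix_mulVec_le_of_iso [CommRing α] [LinearOrder α]
    [IsStrictOrderedRing α] (φ : G ≃g G) {u w : V → α}
    (h : ∀ S T, G.Adj S T →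
      u S * u T + u (φ S) * u (φ T) ≤ w S * w T + w (φ S) * w (φ T)) :
    u ⬝ᵥ (G.adjMatrix α *ᵥ u) ≤ w ⬝ᵥ (G.adjMatrix α *ᵥ w) := by
  have double (x : V → α) : x ⬝ᵥ (G.adjMatrix α *ᵥ x) + x ⬝ᵥ (G.adjMatrix α *ᵥ x) =
      ∑ S, ∑ T, G.adjMatrix α S T * (x S * x T + x (φ S) * x (φ T)) := by
    nth_rw 2 [← φ.dotProduct_adjMatrix_mulVec_comp x]
    simp only [dotProduct_adjMatrix_mulVec_eq_sum, ← Finset.sum_add_distrib, mul_add,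
      Function.comp_apply]
  have hle : ∑ S, ∑ T, G.adjMatrix α S T * (u S * u T + u (φ S) * u (φ T)) ≤
      ∑ S, ∑ T, G.adjMatrix α S T * (w S * w T + w (φ S) * w (φ T)) := by
    refine Finset.sum_le_sum fun S _ => Finset.sum_le_sum fun T _ => ?_
    by_cases hST : G.Adj S T
    · simpa [adjMatrix_apply, hST] using h S T hST
    · simp [adjMatrix_apply, hST]
  linarith [double u, double w]

end SimpleGraph

section Cube

variable {d : ℕ}

def cubeCongr (e : Equiv.Perm (Fin d)) : cube d ≃g cube d where
  toEquiv := e.finsetCongr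
  map_rel_iff' {S T} := by
    change (symmDiff (S.map e.toEmbedding) (T.map e.toEmbedding)).card = 1 ↔
      (symmDiff S T).card = 1
    rw [Finset.map_eq_image, Finset.map_eq_image,
      ← Finset.image_symmDiff _ _ e.toEmbedding.injective,
      Finset.card_image_of_injective _ e.toEmbedding.injective]

@[simp]
theorem mem_cubeCongr {e : Equiv.Perm (Fin d)} {S : Finset (Fin d)} {a : Fin d} :
    a ∈ cubeCongr e S ↔ e.symm a ∈ S := Finset.mem_map_equiv

variable {i j : Fin d} {S T : Finset (Fin d)}

@[simp]
theorem left_mem_cubeCongr_swap : i ∈ cubeCongr (Equiv.swap i j) S ↔ j ∈ S := by simp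

@[simp]
theorem right_mem_cubeCongr_swap : j ∈ cubeCongr (Equiv.swap i j) S ↔ i ∈ S := by simp

@[simp]
theorem cubeCongr_swap_cubeCongr_swap (S : Finset (Fin d)) :
    cubeCongr (Equiv.swap i j) (cubeCongr (Equiv.swap i j) S) = S := by
  ext a; simp

theorem cubeCongr_swap_eq_insert_erase (hij : i ≠ j) (hi : i ∈ S) (hj : j ∉ S) :
    cubeCongr (Equiv.swap i j) S = insert j (S.erase i) := by
  ext a
  rcases eq_or_ne a i with rfl | hai
  · simp [hj, hij]
  rcases eq_or_ne a j with rfl | haj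
  · simp [hi]
  · simp [Equiv.swap_apply_of_ne_of_ne hai haj, hai, haj]

theorem cubeCongr_swap_eq_self (h : i ∈ S ↔ j ∈ S) : cubeCongr (Equiv.swap i j) S = S := by
  ext a
  rcases eq_or_ne a i with rfl | hai
  · simp [h]
  rcases eq_or_ne a j with rfl | haj
  · simp [h]
  · simp [Equiv.swap_apply_of_ne_of_ne hai haj]

theorem mem_iff_mem_of_cube_adj (hij : i ≠ j) (hST : (cube d).Adj S T)
    (hS : ¬(i ∈ S ↔ j ∈ S)) (hT : ¬(i ∈ T ↔ j ∈ T)) : i ∈ S ↔ i ∈ T := by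
  by_contra h
  have hi : i ∈ symmDiff S T := by rw [Finset.mem_symmDiff]; tauto
  have hj : j ∈ symmDiff S T := by rw [Finset.mem_symmDiff]; tauto
  exact (Finset.one_lt_card.mpr ⟨i, hi, j, hj, hij⟩).ne' hST

end Cube

theorem mul_add_mul_le_min_mul_min_add_max_mul_max {α : Type*} [CommRing α] [LinearOrder α]
    [IsStrictOrderedRing α] (a a' b b' : α) :
    a * b + a' * b' ≤ min a a' * min b b' + max a a' * max b b' := by
  rcases le_total a a' with ha | ha <;> rcases le_total b b' with hb | hb <;>
    simp only [min_eq_left, min_eq_right, max_eq_left, max_eq_right, ha, hb] <;>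
    nlinarith [mul_nonneg (sub_nonneg.2 ha) (sub_nonneg.2 hb)]

section Compression

variable {d : ℕ} {i j : Fin d} {S T : Finset (Fin d)} (v : Finset (Fin d) → ℝ)

theorem compIJ_of_iff (h : i ∈ S ↔ j ∈ S) : compIJ d i j v S = v S := by
  rw [compIJ, if_neg (by tauto), if_neg (by tauto)]

theorem compIJ_of_mem_of_notMem (hij : i ≠ j) (hi : i ∈ S) (hj : j ∉ S) :
    compIJ d i j v S = min (v S) (v (cubeCongr (Equiv.swap i j) S)) := by
  rw [compIJ, if_pos ⟨hi, hj⟩, cubeCongr_swap_eq_insert_erase hij hi hj]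

theorem compIJ_cubeCongr_swap_of_mem_of_notMem (hij : i ≠ j) (hi : i ∈ S) (hj : j ∉ S) :
    compIJ d i j v (cubeCongr (Equiv.swap i j) S) =
      max (v S) (v (cubeCongr (Equiv.swap i j) S)) := by
  have hj' : j ∈ cubeCongr (Equiv.swap i j) S := right_mem_cubeCongr_swap.2 hi
  have hi' : i ∉ cubeCongr (Equiv.swap i j) S := left_mem_cubeCongr_swap.not.2 hj
  rw [compIJ, if_neg (by tauto), if_pos ⟨hj', hi'⟩,
    ← cubeCongr_swap_eq_insert_erase hij.symm hj' hi', Equiv.swap_comm,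
    cubeCongr_swap_cubeCongr_swap, max_comm]

theorem compIJ_add_compIJ_cubeCongr_swap (hij : i ≠ j) (S : Finset (Fin d)) :
    compIJ d i j v S + compIJ d i j v (cubeCongr (Equiv.swap i j) S) =
      v S + v (cubeCongr (Equiv.swap i j) S) := by
  by_cases hS : i ∈ S ↔ j ∈ S
  · rw [cubeCongr_swap_eq_self hS, compIJ_of_iff v hS]
  by_cases hi : i ∈ S
  · rw [compIJ_of_mem_of_notMem v hij hi (by tauto),
      compIJ_cubeCongr_swap_of_mem_of_notMem v hij hi (by tauto), min_add_max]
  · set T := cubeCongr (Equiv.swap i j) S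
    have hST : S = cubeCongr (Equiv.swap i j) T := (cubeCongr_swap_cubeCongr_swap S).symm
    have hiT : i ∈ T := left_mem_cubeCongr_swap.2 (by tauto)
    have hjT : j ∉ T := right_mem_cubeCongr_swap.not.2 hi
    rw [hST, compIJ_of_mem_of_notMem v hij hiT hjT,
      compIJ_cubeCongr_swap_of_mem_of_notMem v hij hiT hjT, add_comm, min_add_max, add_comm]

theorem compIJ_pair_eq_of_iff (hij : i ≠ j) (hS : i ∈ S ↔ j ∈ S) (T : Finset (Fin d)) :
    v S * v T + v (cubeCongr (Equiv.swap i j) S) * v (cubeCongr (Equiv.swap i j) T) =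
      compIJ d i j v S * compIJ d i j v T +
        compIJ d i j v (cubeCongr (Equiv.swap i j) S) *
          compIJ d i j v (cubeCongr (Equiv.swap i j) T) := by
  rw [cubeCongr_swap_eq_self hS, compIJ_of_iff v hS, ← mul_add, ← mul_add,
    compIJ_add_compIJ_cubeCongr_swap v hij]

theorem compIJ_pair_le_of_mem_of_notMem (hij : i ≠ j) (hiS : i ∈ S) (hjS : j ∉ S)
    (hiT : i ∈ T) (hjT : j ∉ T) :
    v S * v T + v (cubeCongr (Equiv.swap i j) S) * v (cubeCongr (Equiv.swap i j) T) ≤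
      compIJ d i j v S * compIJ d i j v T +
        compIJ d i j v (cubeCongr (Equiv.swap i j) S) *
          compIJ d i j v (cubeCongr (Equiv.swap i j) T) := by
  rw [compIJ_of_mem_of_notMem v hij hiS hjS, compIJ_of_mem_of_notMem v hij hiT hjT,
    compIJ_cubeCongr_swap_of_mem_of_notMem v hij hiS hjS,
    compIJ_cubeCongr_swap_of_mem_of_notMem v hij hiT hjT]
  exact mul_add_mul_le_min_mul_min_add_max_mul_max _ _ _ _

theorem compIJ_pair_le_of_adj (hij : i ≠ j) (hST : (cube d).Adj S T) :
    v S * v T + v (cubeCongr (Equiv.swap i j) S) * v (cubeCongr (Equiv.swap i j) T) ≤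
      compIJ d i j v S * compIJ d i j v T +
        compIJ d i j v (cubeCongr (Equiv.swap i j) S) *
          compIJ d i j v (cubeCongr (Equiv.swap i j) T) := by
  by_cases hS : i ∈ S ↔ j ∈ S
  · exact (compIJ_pair_eq_of_iff v hij hS T).le
  by_cases hT : i ∈ T ↔ j ∈ T
  · linarith [compIJ_pair_eq_of_iff v hij hT S]
  have hiST := mem_iff_mem_of_cube_adj hij hST hS hT
  by_cases hiS : i ∈ S
  · exact compIJ_pair_le_of_mem_of_notMem v hij hiS (by tauto) (hiST.1 hiS) (by tauto)
  · have h := compIJ_pair_le_of_mem_of_notMem v hij (S := cubeCongr (Equiv.swap i j) S)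
      (T := cubeCongr (Equiv.swap i j) T)
      (left_mem_cubeCongr_swap.2 (by tauto)) (right_mem_cubeCongr_swap.not.2 hiS)
      (left_mem_cubeCongr_swap.2 (by tauto)) (right_mem_cubeCongr_swap.not.2 (hiST.not.1 hiS))
    rw [cubeCongr_swap_cubeCongr_swap, cubeCongr_swap_cubeCongr_swap] at h
    linarith

end Compression

theorem ij_compression_quadForm (d : ℕ) (i j : Fin d) (hij : i ≠ j)
    (v : Finset (Fin d) → ℝ) :
    v ⬝ᵥ ((cube d).adjMatrix ℝ *ᵥ v) ≤
      compIJ d i j v ⬝ᵥ ((cube d).adjMatrix ℝ *ᵥ compIJ d i j v) :=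
  dotProduct_adjMatrix_mulVec_le_of_iso (cubeCongr (Equiv.swap i j))
    fun _ _ hST => compIJ_pair_le_of_adj v hij hST
end

section
/- For d even, the Hamming ball H = H_d^{d/2−1} (the subgraph of Q_d induced by all subsets of [d] of size at most d/2 − 1) satisfies λ₁(H) = d − 2. -/
/-! The weight `S ↦ d - 2|S|` is an eigenvector of `Q_d` with eigenvalue `d - 2`. It vanishes on
the middle level `d/2`, which is the outer vertex boundary of `H_d^{d/2-1}`, so it restricts to a
positive eigenvector of the ball with the same eigenvalue; and a positive eigenvector of a
symmetric nonnegative matrix belongs to its largest eigenvalue. -/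

open SimpleGraph Finset Matrix

theorem Matrix.hasEigenvalue_toLin'_iff {n R : Type*} [Fintype n] [DecidableEq n] [CommRing R]
    {A : Matrix n n R} {μ : R} :
    Module.End.HasEigenvalue (toLin' A) μ ↔ ∃ w ≠ 0, A *ᵥ w = μ • w := by
  constructor
  · intro h
    obtain ⟨w, hw⟩ := h.exists_hasEigenvector
    exact ⟨w, hw.2, hw.apply_eq_smul⟩
  · rintro ⟨w, hw0, hw⟩
    exact Module.End.hasEigenvalue_of_hasEigenvector
      ⟨Module.End.mem_eigenspace_iff.2 (by rwa [toLin'_apply]), hw0⟩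

/-- Perron bound: pairing the entrywise inequality `|μ| |w| ≤ A |w|` with a positive left
eigenvector `v` gives `|μ| ⟨v, |w|⟩ ≤ r ⟨v, |w|⟩`. -/
theorem Matrix.abs_le_of_mulVec_eq_smul_of_pos_vecMul {n : Type*} [Fintype n]
    {A : Matrix n n ℝ} (hA : ∀ i j, 0 ≤ A i j) {v : n → ℝ} (hv : ∀ i, 0 < v i) {r : ℝ}
    (hvA : v ᵥ* A = r • v) {μ : ℝ} {w : n → ℝ} (hw0 : w ≠ 0) (hw : A *ᵥ w = μ • w) :
    |μ| ≤ r := by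
  set u : n → ℝ := fun i => |w i|
  have hu : |μ| • u ≤ A *ᵥ u := fun i => by
    calc |μ| * |w i| = |(A *ᵥ w) i| := by simp [hw, abs_mul]
      _ ≤ ∑ j, |A i j * w j| := Finset.abs_sum_le_sum_abs _ _
      _ = (A *ᵥ u) i := by simp [mulVec, dotProduct, abs_mul, abs_of_nonneg (hA i _), u]
  have hvu : 0 < v ⬝ᵥ u := by
    obtain ⟨i, hi⟩ := Function.ne_iff.1 hw0
    exact Finset.sum_pos' (fun j _ => mul_nonneg (hv j).le (abs_nonneg _))
      ⟨i, Finset.mem_univ _, mul_pos (hv i) (abs_pos.2 hi)⟩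
  refine le_of_mul_le_mul_right ?_ hvu
  calc |μ| * (v ⬝ᵥ u) = v ⬝ᵥ (|μ| • u) := by rw [dotProduct_smul, smul_eq_mul]
    _ ≤ v ⬝ᵥ (A *ᵥ u) := dotProduct_le_dotProduct_of_nonneg_left hu fun i => (hv i).le
    _ = r * (v ⬝ᵥ u) := by rw [dotProduct_mulVec, hvA, smul_dotProduct, smul_eq_mul]

theorem SimpleGraph.lam1_eq_of_pos_eigenvector {V : Type*} [Fintype V] [DecidableEq V]
    (G : SimpleGraph V) [DecidableRel G.Adj] {v : V → ℝ} (hv : ∀ i, 0 < v i) {r : ℝ}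
    (hGv : G.adjMatrix ℝ *ᵥ v = r • v) [Nonempty V] : lam1 G = r := by
  have hr : Module.End.HasEigenvalue (toLin' (G.adjMatrix ℝ)) r :=
    hasEigenvalue_toLin'_iff.2 ⟨v, fun h => (hv (Classical.arbitrary V)).ne' (by simp [h]), hGv⟩
  have hle : ∀ μ ∈ {μ : ℝ | Module.End.HasEigenvalue (toLin' (G.adjMatrix ℝ)) μ}, μ ≤ r := by
    rintro μ hμ
    obtain ⟨w, hw0, hw⟩ := hasEigenvalue_toLin'_iff.1 hμ
    refine (le_abs_self μ).trans (abs_le_of_mulVec_eq_smul_of_pos_vecMul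
      (fun i j => ?_) hv ?_ hw0 hw)
    · rw [adjMatrix_apply]; split_ifs <;> norm_num
    · rw [← mulVec_transpose, transpose_adjMatrix, hGv]
  exact le_antisymm (csSup_le ⟨r, hr⟩ hle) (le_csSup ⟨r, hle⟩ hr)

theorem SimpleGraph.adjMatrix_induce_mulVec_apply {V R : Type*} [Fintype V]
    [NonAssocSemiring R] (G : SimpleGraph V) [DecidableRel G.Adj] (s : Set V) [Fintype s]
    [DecidableRel (G.induce s).Adj] {F : V → R} (hF : ∀ u ∈ s, ∀ v ∉ s, G.Adj u v → F v = 0)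
    (u : s) :
    ((G.induce s).adjMatrix R *ᵥ fun v => F v) u = ∑ v, if G.Adj u v then F v else 0 := by
  simp only [mulVec, dotProduct, adjMatrix_apply, comap_adj, Function.Embedding.subtype_apply,
    ite_mul, one_mul, zero_mul]
  rw [sum_set_coe (f := fun v => if G.Adj u v then F v else 0)]
  refine sum_subset (subset_univ _) fun v _ hv => ?_
  split_ifs with huv
  · exact hF u u.2 v (by simpa using hv) huv
  · rfl

theorem Finset.symmDiff_singleton_of_mem {α : Type*} [DecidableEq α] {S : Finset α} {x : α}
    (hx : x ∈ S) : symmDiff S {x} = S.erase x := by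
  ext y; by_cases y = x <;> simp_all [mem_symmDiff]

theorem Finset.symmDiff_singleton_of_notMem {α : Type*} [DecidableEq α] {S : Finset α} {x : α}
    (hx : x ∉ S) : symmDiff S {x} = insert x S := by
  ext y; by_cases y = x <;> simp_all [mem_symmDiff]

theorem Finset.sum_symmDiff_singleton {α M : Type*} [Fintype α] [DecidableEq α]
    [AddCommMonoid M] (S : Finset α) (g : Finset α → M) :
    ∑ x, g (symmDiff S {x}) = ∑ x ∈ S, g (S.erase x) + ∑ x ∈ Sᶜ, g (insert x S) := by
  rw [← sum_add_sum_compl S]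
  congr 1
  · exact sum_congr rfl fun x hx => by rw [symmDiff_singleton_of_mem hx]
  · exact sum_congr rfl fun x hx => by rw [symmDiff_singleton_of_notMem (mem_compl.1 hx)]

theorem cube_sum_ite_adj {M : Type*} [AddCommMonoid M] {d : ℕ} (S : Finset (Fin d))
    (F : Finset (Fin d) → M) :
    ∑ T, (if (cube d).Adj S T then F T else 0) = ∑ x, F (symmDiff S {x}) := by
  rw [← Equiv.sum_comp ((symmDiff_right_involutive S).toPerm _)]
  simp only [Function.Involutive.coe_toPerm, cube, symmDiff_symmDiff_cancel_left]
  rw [← sum_filter, ← powerset_univ, ← powersetCard_eq_filter, powersetCard_one, sum_map]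
  rfl

theorem cube_card_le_of_adj {d : ℕ} {S T : Finset (Fin d)} (h : (cube d).Adj S T) :
    #T ≤ #S + 1 := by
  calc #T ≤ #(symmDiff S T ∪ S) := card_le_card (le_symmDiff_sup_left S T)
    _ ≤ #(symmDiff S T) + #S := card_union_le _ _
    _ = #S + 1 := by rw [show #(symmDiff S T) = 1 from h, add_comm]

/-- The weight `1 - 2|T|/d`, scaled by `d`. -/
noncomputable def cubeEigenvector (d : ℕ) (T : Finset (Fin d)) : ℝ := d - 2 * #T

theorem cubeEigenvector_erase {d : ℕ} {S : Finset (Fin d)} {x : Fin d} (hx : x ∈ S) :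
    cubeEigenvector d (S.erase x) = cubeEigenvector d S + 2 := by
  rw [cubeEigenvector, cubeEigenvector, card_erase_of_mem hx,
    Nat.cast_sub (card_pos.2 ⟨x, hx⟩)]
  ring

theorem cubeEigenvector_insert {d : ℕ} {S : Finset (Fin d)} {x : Fin d} (hx : x ∉ S) :
    cubeEigenvector d (insert x S) = cubeEigenvector d S - 2 := by
  rw [cubeEigenvector, cubeEigenvector, card_insert_of_notMem hx]
  push_cast
  ring

/-- Each vertex of `Q_d` has `|S|` neighbours one level down and `d - |S|` one level up. -/
theorem cube_sum_cubeEigenvector_symmDiff_singleton {d : ℕ} (S : Finset (Fin d)) :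
    ∑ x, cubeEigenvector d (symmDiff S {x}) = (d - 2) * cubeEigenvector d S := by
  have hcompl : (#Sᶜ : ℝ) = d - #S := by
    rw [card_compl, Fintype.card_fin, Nat.cast_sub (by simpa using card_le_univ S)]
  rw [sum_symmDiff_singleton, sum_congr rfl fun x hx => cubeEigenvector_erase hx,
    sum_congr rfl fun x hx => cubeEigenvector_insert (mem_compl.1 hx)]
  simp only [sum_const, nsmul_eq_mul, hcompl]
  unfold cubeEigenvector
  ring

theorem cubeEigenvector_pos {d : ℕ} {T : Finset (Fin d)} (h : 2 * #T < d) :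
    0 < cubeEigenvector d T := by
  rw [cubeEigenvector, sub_pos]
  exact_mod_cast h

theorem cubeEigenvector_eq_zero {d : ℕ} {T : Finset (Fin d)} (h : 2 * #T = d) :
    cubeEigenvector d T = 0 := by
  rw [cubeEigenvector, sub_eq_zero]
  exact_mod_cast h.symm

abbrev hammingBall (d k : ℕ) : Set (Finset (Fin d)) := {S | S.card ≤ k}

theorem hammingBall_adjMatrix_mulVec_cubeEigenvector {d : ℕ} (hd : Even d) :
    ((cube d).induce (hammingBall d (d / 2 - 1))).adjMatrix ℝ *ᵥ
        (fun S => cubeEigenvector d S) =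
      ((d : ℝ) - 2) • fun S : hammingBall d (d / 2 - 1) => cubeEigenvector d S := by
  have hboundary : ∀ S ∈ hammingBall d (d / 2 - 1), ∀ T ∉ hammingBall d (d / 2 - 1),
      (cube d).Adj S T → cubeEigenvector d T = 0 := by
    intro S hS T hT hST
    have hTS := cube_card_le_of_adj hST
    have hTd : #T ≤ d := by simpa using T.card_le_univ
    simp only [hammingBall, Set.mem_ofPred_eq, not_le] at hS hT
    obtain ⟨m, rfl⟩ := hd
    exact cubeEigenvector_eq_zero (by omega)
  funext S
  rw [adjMatrix_induce_mulVec_apply _ _ hboundary, cube_sum_ite_adj,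
    cube_sum_cubeEigenvector_symmDiff_singleton]
  rfl

theorem hammingBall_half_minus_one_eigenvalue (d : ℕ) (hd : Even d) (h2 : 2 ≤ d) :
    lam1 ((cube d).induce {S : Finset (Fin d) | S.card ≤ d / 2 - 1}) = (d : ℝ) - 2 := by
  have : Nonempty (hammingBall d (d / 2 - 1)) := ⟨⟨∅, by simp⟩⟩
  have hpos : ∀ S : hammingBall d (d / 2 - 1), 0 < cubeEigenvector d S := fun S => by
    have hS : (S : Finset (Fin d)).card ≤ d / 2 - 1 := S.2
    exact cubeEigenvector_pos (by omega)
  exact lam1_eq_of_pos_eigenvector _ hpos (hammingBall_adjMatrix_mulVec_cubeEigenvector hd)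
end
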